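/- Let X be a Banach space and P an idempotent bounded operator on X. Let T be a bounded operator such that TP − PT is compact and there exists a bounded operator S with SP − PS compact and S(T + P) − I compact. Then writing T₂ = ((I−P)T(I−P)) restricted to N(P), the operator T₂ is upper semi-Fredholm with complemented range (i.e., there exist S₂ and finite rank F₂ on N(P) with S₂T₂ = I + F₂). -/

import Mathlib

open ContinuousLinearMap

/-- A bounded operator is Fredholm if its kernel is finite dimensional and its range
is closed of finite codimension. -/
def IsFredholm {E : Type*} [NormedAddCommGroup E] [NormedSpace ℂ E] (T : E →L[ℂ] E) : Prop :=
  FiniteDimensional ℂ (LinearMap.ker T.toLinearMap) ∧ IsClosed (LinearMap.range T.toLinearMap : Set E) ∧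
    FiniteDimensional ℂ (E ⧸ LinearMap.range T.toLinearMap)

/-- The Fredholm index `dim N(T) - codim R(T)`. -/
noncomputable def fredInd {E : Type*} [NormedAddCommGroup E] [NormedSpace ℂ E]
    (T : E →L[ℂ] E) : ℤ :=
  (Module.finrank ℂ (LinearMap.ker T.toLinearMap) : ℤ) - (Module.finrank ℂ (E ⧸ LinearMap.range T.toLinearMap) : ℤ)

/-- A Riesz operator: `T - λ•I` is Fredholm for every nonzero scalar `λ`. -/
def IsRiesz {E : Type*} [NormedAddCommGroup E] [NormedSpace ℂ E] (T : E →L[ℂ] E) : Prop :=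
  ∀ c : ℂ, c ≠ 0 → _root_.IsFredholm (T - c • (1 : E →L[ℂ] E))

/-- Restriction of an operator to an invariant subspace. -/
def restrictCLM {E : Type*} [NormedAddCommGroup E] [NormedSpace ℂ E] (T : E →L[ℂ] E)
    (M : Submodule ℂ E) (h : ∀ x : M, T ↑x ∈ M) : M →L[ℂ] M :=
  (T.comp M.subtypeL).codRestrict M h

/-- A finite rank operator. -/
def FinRank {E : Type*} [NormedAddCommGroup E] [NormedSpace ℂ E] (F : E →L[ℂ] E) : Prop :=
  FiniteDimensional ℂ (LinearMap.range F.toLinearMap)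

/-- An operator commuting with `P` leaves the range of `P` invariant. -/
lemma rangeInv {E : Type*} [NormedAddCommGroup E] [NormedSpace ℂ E] {P T : E →L[ℂ] E}
    (hc : T ∘L P = P ∘L T) : ∀ x : LinearMap.range P.toLinearMap, T ↑x ∈ LinearMap.range P.toLinearMap := by
  rintro ⟨_, y, rfl⟩
  exact ⟨T y, by simpa using (DFunLike.congr_fun hc y).symm⟩

/-- An operator commuting with `P` leaves the kernel of `P` invariant. -/
lemma kerInv {E : Type*} [NormedAddCommGroup E] [NormedSpace ℂ E] {P T : E →L[ℂ] E}
    (hc : T ∘L P = P ∘L T) : ∀ x : LinearMap.ker P.toLinearMap, T ↑x ∈ LinearMap.ker P.toLinearMap := by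
  rintro ⟨x, hx⟩
  have h1 : T (P x) = P (T x) := DFunLike.congr_fun hc x
  simp only [LinearMap.mem_ker] at hx ⊢
  simp only [ContinuousLinearMap.coe_coe] at *
  rw [← h1, hx, map_zero]

/-- `P T P` leaves the range of `P` invariant. -/
lemma rangeInvQuad {E : Type*} [NormedAddCommGroup E] [NormedSpace ℂ E] (P T : E →L[ℂ] E) :
    ∀ x : LinearMap.range P.toLinearMap, (P ∘L T ∘L P) ↑x ∈ LinearMap.range P.toLinearMap :=
  fun x => ⟨T (P ↑x), rfl⟩

/-- `(I-P) T (I-P)` leaves the kernel of `P` invariant when `P` is idempotent. -/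
lemma kerInvQuad {E : Type*} [NormedAddCommGroup E] [NormedSpace ℂ E] {P : E →L[ℂ] E}
    (hP : P ∘L P = P) (T : E →L[ℂ] E) :
    ∀ x : LinearMap.ker P.toLinearMap, (((1 : E →L[ℂ] E) - P) ∘L T ∘L ((1 : E →L[ℂ] E) - P)) ↑x ∈
      LinearMap.ker P.toLinearMap := by
  intro x
  have h : ∀ z, P (((1 : E →L[ℂ] E) - P) z) = 0 := by
    intro z
    have h2 : P (P z) = P z := DFunLike.congr_fun hP z
    simp [ContinuousLinearMap.sub_apply, h2]
  exact LinearMap.mem_ker.mpr (h _)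

/-!
With `Q = I - P`, the relations `QP = 0` and `QQ = Q` give the exact identity
`QSQ · QTQ = Q + Q(S(T + P) - I - [S, P](I + T))Q`, so on `N(P)` the compressions satisfy
`S₂ T₂ = I + K` with `K` compact. By Riesz theory `I + K` is Fredholm, hence has a left inverse `R`
modulo finite rank operators. Then `R S₂` is a left inverse of `T₂` modulo finite rank operators,
and this alone forces a finite-dimensional kernel and a closed range.
-/

open LinearMap.FiniteRangeSetoid

section LeftQuasiInverse

variable {𝕜 E F : Type*} [NontriviallyNormedField 𝕜]
  [AddCommGroup E] [Module 𝕜 E] [TopologicalSpace E]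
  [AddCommGroup F] [Module 𝕜 F] [TopologicalSpace F]
  {A : E →L[𝕜] F} {R : F →L[𝕜] E}

theorem LinearMap.IsLeftQuasiInverse.coFG_eqLocus (h : (R : F →ₗ[𝕜] E).IsLeftQuasiInverse A) :
    ((R ∘L A : E →ₗ[𝕜] E).eqLocus LinearMap.id).CoFG :=
  equiv_iff_eqLocus_coFG.mp h

theorem LinearMap.IsLeftQuasiInverse.finiteDimensional_ker
    (h : (R : F →ₗ[𝕜] E).IsLeftQuasiInverse A) : FiniteDimensional 𝕜 A.ker := by
  refine Module.Finite.iff_fg.mpr (h.coFG_eqLocus.fg_of_disjoint ?_)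
  rw [Submodule.disjoint_def]
  intro x (hxA : A x = 0) (hxR : R (A x) = x)
  rwa [hxA, map_zero, eq_comm] at hxR

theorem LinearMap.IsLeftQuasiInverse.isClosed_range [CompleteSpace 𝕜] [IsTopologicalAddGroup F]
    [ContinuousSMul 𝕜 F] [T2Space F] (h : (R : F →ₗ[𝕜] E).IsLeftQuasiInverse A) :
    IsClosed (A.range : Set F) := by
  have := h.coFG_eqLocus
  refine LinearMap.isClosed_range_of_isClosed_map_of_finiteDimensional_quotient
    (s := (R ∘L A : E →ₗ[𝕜] E).eqLocus LinearMap.id) ?_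
  have hmap : (((R ∘L A : E →ₗ[𝕜] E).eqLocus LinearMap.id).map (A : E →ₗ[𝕜] F) : Set F) =
      {y | A (R y) = y} := by
    ext y
    constructor
    · rintro ⟨x, hx, rfl⟩
      exact congrArg A hx
    · intro hy
      exact ⟨R y, congrArg R hy, hy⟩
  rw [hmap]
  exact isClosed_eq (A.continuous.comp R.continuous) continuous_id

end LeftQuasiInverse

theorem LinearMap.IsLeftQuasiInverse.finRank_comp_sub_one {E F : Type*} [NormedAddCommGroup E]
    [NormedSpace ℂ E] [NormedAddCommGroup F] [NormedSpace ℂ F] {A : E →L[ℂ] F} {R : F →L[ℂ] E}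
    (h : (R : F →ₗ[ℂ] E).IsLeftQuasiInverse A) : FinRank (R ∘L A - 1) :=
  Module.Finite.iff_fg.mpr (equiv_iff_hasFiniteRange.mp h)

section FredholmAlternative

variable {𝕜 E : Type*} [NontriviallyNormedField 𝕜] [NormedAddCommGroup E] [NormedSpace 𝕜 E]
  {K : E →L[𝕜] E}

theorem IsCompactOperator.surjective_one_add_of_injective [CompleteSpace E]
    (hK : IsCompactOperator K) (hinj : Function.Injective ⇑(1 + K)) :
    Function.Surjective ⇑(1 + K) := by
  rcases hK.hasEigenvalue_or_mem_resolventSet (neg_ne_zero.mpr (one_ne_zero' 𝕜)) with hμ | hμ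
  · obtain ⟨x, hx⟩ := hμ.exists_hasEigenvector
    refine absurd (hinj ?_) hx.2
    have hKx : K x = -x := by simpa using hx.apply_eq_smul
    simp [hKx]
  · rw [spectrum.mem_resolventSet_iff, ← IsUnit.neg_iff,
      ContinuousLinearMap.isUnit_iff_bijective] at hμ
    convert hμ.2
    ext x
    simp [add_comm]

theorem IsCompactOperator.finiteDimensional_ker_one_add [CompleteSpace 𝕜]
    (hK : IsCompactOperator K) : FiniteDimensional 𝕜 (1 + K).ker := by
  have hfix : ∀ x ∈ (1 + K).ker, (-K : E →ₗ[𝕜] E) x = x := fun x (hx : x + K x = 0) ↦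
    neg_eq_of_add_eq_zero_left hx
  have hinv : ∀ x ∈ (1 + K).ker, (-K : E →ₗ[𝕜] E) x ∈ (1 + K).ker := fun x hx ↦
    (hfix x hx).symm ▸ hx
  apply FiniteDimensional.of_isCompactOperator_id
  have hid : (id : (1 + K).ker → (1 + K).ker) = (-K : E →ₗ[𝕜] E).restrict hinv :=
    funext fun x ↦ Subtype.ext (hfix x x.2).symm
  exact hid ▸ hK.neg.restrict hinv (isClosed_ker (1 + K))

end FredholmAlternative

section Riesz

variable {𝕜 E F : Type*} [RCLike 𝕜] [NormedAddCommGroup E] [NormedSpace 𝕜 E] [CompleteSpace E]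
  {K : E →L[𝕜] E}

/- If `E ⧸ R(A)` were infinite-dimensional, `N(A)` would embed into it missing some class `q`.
Lifting this embedding and composing with a projection onto `N(A)` gives a finite rank `F` with
`A + F` injective, hence onto by the Fredholm alternative, although it misses `q` modulo `R(A)`. -/
theorem IsCompactOperator.coFG_range_one_add (hK : IsCompactOperator K) : (1 + K).range.CoFG := by
  set A : E →L[𝕜] E := 1 + K
  set N := A.ker
  have : FiniteDimensional 𝕜 N := hK.finiteDimensional_ker_one_add
  by_contra hQ
  have hrank : Cardinal.lift (Module.rank 𝕜 N) < Cardinal.lift (Module.rank 𝕜 (E ⧸ A.range)) :=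
    (Cardinal.lift_lt_aleph0.mpr (Module.rank_lt_aleph0_iff.mpr inferInstance)).trans_le
      (Cardinal.aleph0_le_lift.mpr (not_lt.mp (mt Module.rank_lt_aleph0_iff.mp hQ)))
  obtain ⟨ι, hι⟩ := Module.Free.exists_linearMap_injective_of_lift_rank_lt hrank
  obtain ⟨q, hq⟩ : ∃ q, q ∉ ι.range := by
    by_contra! h
    exact hQ (Module.Finite.of_surjective ι fun q ↦ h q)
  obtain ⟨s, hs⟩ := A.range.mkQ.exists_rightInverse_of_surjective A.range.range_mkQ
  obtain ⟨p, hp⟩ := Submodule.ClosedComplemented.of_finiteDimensional N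
  let F : E →L[𝕜] E := LinearMap.toContinuousLinearMap (s ∘ₗ ι) ∘L p
  have hF : IsCompactOperator F := (isCompactOperator_of_locallyCompactSpace_dom p).clm_comp
    (LinearMap.toContinuousLinearMap (s ∘ₗ ι))
  have hmkQ : ∀ x, A.range.mkQ ((1 + (K + F)) x) = ι (p x) := by
    intro x
    have hA : A.range.mkQ (A x) = 0 := (Submodule.Quotient.mk_eq_zero _).mpr ⟨x, rfl⟩
    have hsplit : (1 + (K + F)) x = A x + s (ι (p x)) := by
      simp [A, F, add_assoc]; rfl
    rw [hsplit, map_add, hA, zero_add]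
    exact congr($hs (ι (p x)))
  have hinj : Function.Injective ⇑(1 + (K + F)) := by
    refine (injective_iff_map_eq_zero _).mpr fun x hx ↦ ?_
    have hpx : p x = 0 :=
      hι (by rw [← hmkQ, show (1 + (K + F)) x = 0 from hx, map_zero, map_zero])
    have hAx : x ∈ N := by
      have : (1 + (K + F)) x = A x := by simp [A, F, hpx]
      exact (this ▸ hx : A x = 0)
    exact congr(Subtype.val $((hp ⟨x, hAx⟩).symm.trans hpx))
  obtain ⟨x, hx⟩ := (hK.add hF).surjective_one_add_of_injective hinj (s q)
  exact hq ⟨p x, by rw [← hmkQ, hx]; exact congr($hs q)⟩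

theorem ContinuousLinearMap.isStrictMap_and_isClosed_range_of_coFG [NormedAddCommGroup F]
    [NormedSpace 𝕜 F] [CompleteSpace F] (u : E →L[𝕜] F) (h : u.range.CoFG) :
    Topology.IsStrictMap u ∧ IsClosed (u.range : Set F) := by
  obtain ⟨C, hC⟩ := Submodule.exists_isCompl u.range
  have : FiniteDimensional 𝕜 C := .of_fg (h.fg_of_isCompl hC)
  have : IsClosed (C : Set F) := C.closed_of_finiteDimensional
  rw [u.isStrictMap_isClosed_range_iff_quotient C (.of_finiteDimensional C)]
  have hsurj : Function.Surjective (C.mkQL ∘L u) := by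
    rw [← LinearMap.coe_coe, ← LinearMap.range_eq_top]
    change (C.mkQ ∘ₗ (u : E →ₗ[𝕜] F)).range = ⊤
    rw [LinearMap.range_comp, Submodule.map_mkQ_eq_top, sup_comm, hC.sup_eq_top]
  refine ⟨((C.mkQL ∘L u).isOpenMap hsurj).isStrictMap (map_continuous _), ?_⟩
  rw [LinearMap.range_eq_top.mpr hsurj]
  exact isClosed_univ

theorem IsCompactOperator.isFredholm_one_add (hK : IsCompactOperator K) :
    (1 + K).IsFredholm := by
  have hker := hK.finiteDimensional_ker_one_add
  have hcoker := hK.coFG_range_one_add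
  obtain ⟨hstrict, hclosed⟩ := (1 + K).isStrictMap_and_isClosed_range_of_coFG hcoker
  exact ⟨hstrict, hclosed, hker, hcoker, .of_finiteDimensional _⟩

end Riesz

theorem IsIdempotentElem.compress_mul_compress {R : Type*} [Ring R] {p : R}
    (hp : IsIdempotentElem p) (s t : R) :
    (1 - p) * s * (1 - p) * ((1 - p) * t * (1 - p)) =
      (1 - p) + (1 - p) * (s * (t + p) - 1 - (s * p - p * s) * (1 + t)) * (1 - p) := by
  have hq : (1 - p) * p = 0 := by rw [sub_mul, one_mul, hp.eq, sub_self]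
  have hqq : (1 - p) * (1 - p) = 1 - p := hp.one_sub.eq
  calc (1 - p) * s * (1 - p) * ((1 - p) * t * (1 - p))
      = (1 - p) * s * ((1 - p) * (1 - p)) * t * (1 - p) := by noncomm_ring
    _ = (1 - p) * s * (1 - p) * t * (1 - p) := by rw [hqq]
    _ = (1 - p) + (1 - p) * (s * (t + p) - 1 - (s * p - p * s) * (1 + t)) * (1 - p)
        - ((1 - p) - (1 - p) * (1 - p)) - (1 - p) * p * s * (1 + t) * (1 - p) := by
      noncomm_ring
    _ = _ := by rw [hq, hqq]; noncomm_ring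

section Compression

variable {X : Type*} [NormedAddCommGroup X] [NormedSpace ℂ X] {P : X →L[ℂ] X} (hP : P ∘L P = P)

noncomputable def compression (T : X →L[ℂ] X) :
    LinearMap.ker P.toLinearMap →L[ℂ] LinearMap.ker P.toLinearMap :=
  restrictCLM ((1 - P) ∘L T ∘L (1 - P)) (LinearMap.ker P.toLinearMap) (kerInvQuad hP T)

theorem isCompactOperator_compression {T : X →L[ℂ] X} (hT : IsCompactOperator T) :
    IsCompactOperator (compression hP T) :=
  ((hT.comp_clm (1 - P)).clm_comp (1 - P)).restrict (V := LinearMap.ker P.toLinearMap)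
    (fun x hx ↦ kerInvQuad hP T ⟨x, hx⟩) (isClosed_ker P)

theorem compression_comp_compression (S T : X →L[ℂ] X) :
    compression hP S ∘L compression hP T =
      1 + compression hP (S ∘L (T + P) - 1 - (S ∘L P - P ∘L S) ∘L (1 + T)) := by
  ext ⟨y, hy⟩
  have hP' : IsIdempotentElem P := hP
  have key := congr($(hP'.compress_mul_compress S T) y)
  have hQy : (1 - P) y = y := by simpa using hy
  show ((1 - P) * S * (1 - P) * ((1 - P) * T * (1 - P))) y =
    y + ((1 - P) * (S * (T + P) - 1 - (S * P - P * S) * (1 + T)) * (1 - P)) y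
  rw [key, add_apply, hQy]

end Compression

theorem compression_left_semiFredholm_general
    {X : Type*} [NormedAddCommGroup X] [NormedSpace ℂ X] [CompleteSpace X]
    (P T : X →L[ℂ] X) (hP : P ∘L P = P)
    (hS : ∃ S : X →L[ℂ] X, IsCompactOperator ⇑(S ∘L P - P ∘L S) ∧
      IsCompactOperator ⇑(S ∘L (T + P) - 1)) :
    FiniteDimensional ℂ (LinearMap.ker (ContinuousLinearMap.toLinearMap (restrictCLM
        (((1 : X →L[ℂ] X) - P) ∘L T ∘L ((1 : X →L[ℂ] X) - P))
        (LinearMap.ker P.toLinearMap) (kerInvQuad hP T)))) ∧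
    IsClosed (LinearMap.range (ContinuousLinearMap.toLinearMap (restrictCLM
        (((1 : X →L[ℂ] X) - P) ∘L T ∘L ((1 : X →L[ℂ] X) - P))
        (LinearMap.ker P.toLinearMap) (kerInvQuad hP T))) : Set (LinearMap.ker P.toLinearMap)) ∧
    ∃ (S₂ F₂ : LinearMap.ker P.toLinearMap →L[ℂ] LinearMap.ker P.toLinearMap), FinRank F₂ ∧
      S₂ ∘L restrictCLM (((1 : X →L[ℂ] X) - P) ∘L T ∘L ((1 : X →L[ℂ] X) - P))
        (LinearMap.ker P.toLinearMap) (kerInvQuad hP T) = 1 + F₂ := by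
  obtain ⟨S, hSP, hST⟩ := hS
  have : CompleteSpace (LinearMap.ker P.toLinearMap) := (isClosed_ker P).completeSpace_coe
  have hU : IsCompactOperator (S ∘L (T + P) - 1 - (S ∘L P - P ∘L S) ∘L (1 + T) : X →L[ℂ] X) :=
    hST.sub (hSP.comp_clm (1 + T))
  have hK := isCompactOperator_compression hP hU
  obtain ⟨R, hR, -⟩ := hK.isFredholm_one_add.exists_isQuasiInverse
  have hleft : LinearMap.IsLeftQuasiInverse (R ∘L compression hP S).toLinearMap
      (compression hP T).toLinearMap := by
    change ((R ∘L compression hP S) ∘L compression hP T).toLinearMap ≈ LinearMap.id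
    rw [comp_assoc, compression_comp_compression]
    exact hR
  exact ⟨hleft.finiteDimensional_ker, hleft.isClosed_range, R ∘L compression hP S, _,
    hleft.finRank_comp_sub_one, (add_sub_cancel _ _).symm⟩

/-- If `Π(T)` is left `Π(P)`-invertible in the Calkin algebra (`T` is a
left semi-`P`-Fredholm operator), then the compression `T₂` of `T` to `N(P)` is upper
semi-Fredholm and left invertible modulo finite rank operators on `N(P)`. -/
theorem compression_left_semiFredholm
    {X : Type*} [NormedAddCommGroup X] [NormedSpace ℂ X] [CompleteSpace X]
    (P T : X →L[ℂ] X) (hP : P ∘L P = P)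
    (hTP : IsCompactOperator ⇑(T ∘L P - P ∘L T))
    (hS : ∃ S : X →L[ℂ] X, IsCompactOperator ⇑(S ∘L P - P ∘L S) ∧
      IsCompactOperator ⇑(S ∘L (T + P) - 1)) :
    FiniteDimensional ℂ (LinearMap.ker (ContinuousLinearMap.toLinearMap (restrictCLM
        (((1 : X →L[ℂ] X) - P) ∘L T ∘L ((1 : X →L[ℂ] X) - P))
        (LinearMap.ker P.toLinearMap) (kerInvQuad hP T)))) ∧
    IsClosed (LinearMap.range (ContinuousLinearMap.toLinearMap (restrictCLM
        (((1 : X →L[ℂ] X) - P) ∘L T ∘L ((1 : X →L[ℂ] X) - P))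
        (LinearMap.ker P.toLinearMap) (kerInvQuad hP T))) : Set (LinearMap.ker P.toLinearMap)) ∧
    ∃ (S₂ F₂ : LinearMap.ker P.toLinearMap →L[ℂ] LinearMap.ker P.toLinearMap), FinRank F₂ ∧
      S₂ ∘L restrictCLM (((1 : X →L[ℂ] X) - P) ∘L T ∘L ((1 : X →L[ℂ] X) - P))
        (LinearMap.ker P.toLinearMap) (kerInvQuad hP T) = 1 + F₂ :=
  compression_left_semiFredholm_general P T hP hS
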